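/- Let n ≥ 2 be an integer, A = [[−1, −2n], [2n, 4n² − 1]] acting on ℝ², and v₊ = (−1, n + √(n² − 1)). For any vector x in the closed cone C = {(a, b) : a ≥ 0, b ≥ 0} with x ≠ 0, the normalized iterates A^k x / ‖A^k x‖ converge to v₊/‖v₊‖ as k → ∞. -/
import Mathlib


/-- The Euclidean norm on `Fin 2 → ℝ`. -/
noncomputable def eucNorm (v : Fin 2 → ℝ) : ℝ := Real.sqrt (v 0 ^ 2 + v 1 ^ 2)

lemma eucNorm_smul (t : ℝ) (ht : 0 ≤ t) (v : Fin 2 → ℝ) :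
    eucNorm (t • v) = t * eucNorm v := by
  simp only [eucNorm, Pi.smul_apply, smul_eq_mul]
  rw [show (t * v 0) ^ 2 + (t * v 1) ^ 2 = t ^ 2 * (v 0 ^ 2 + v 1 ^ 2) by ring,
    Real.sqrt_mul (sq_nonneg t), Real.sqrt_sq ht]

lemma continuous_eucNorm : Continuous eucNorm := by
  unfold eucNorm
  exact Real.continuous_sqrt.comp
    (((continuous_apply 0).pow 2).add ((continuous_apply 1).pow 2))

set_option maxHeartbeats 1600000 in
theorem stmt_12 (n : ℤ) (hn : 2 ≤ n)
    (A : Matrix (Fin 2) (Fin 2) ℝ) (hA : A = !![(-1 : ℝ), -(2 * n); 2 * n, 4 * n ^ 2 - 1])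
    (vplus : Fin 2 → ℝ) (hv : vplus = ![(-1 : ℝ), (n : ℝ) + Real.sqrt ((n : ℝ) ^ 2 - 1)])
    (x : Fin 2 → ℝ) (hx : 0 ≤ x 0 ∧ 0 ≤ x 1) (hx0 : x ≠ 0) :
    Filter.Tendsto (fun k : ℕ => (eucNorm ((A ^ k).mulVec x))⁻¹ • (A ^ k).mulVec x)
      Filter.atTop (nhds ((eucNorm vplus)⁻¹ • vplus)) := by
  have hn2 : (2 : ℝ) ≤ (n : ℝ) := by exact_mod_cast hn
  set s : ℝ := Real.sqrt ((n : ℝ) ^ 2 - 1) with hs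
  have hs2 : s ^ 2 = (n : ℝ) ^ 2 - 1 := Real.sq_sqrt (by nlinarith)
  have hs0 : 0 < s := Real.sqrt_pos.mpr (by nlinarith)
  set c : ℝ := (n : ℝ) + s with hcdef
  set L : ℝ := 2 * (n : ℝ) ^ 2 - 1 + 2 * n * s with hLdef
  set M : ℝ := 2 * (n : ℝ) ^ 2 - 1 - 2 * n * s with hMdef
  have hc1 : 1 < c := by nlinarith
  have hL1 : 1 < L := by nlinarith
  have hcL : c ^ 2 = L := by simp only [hcdef, hLdef]; nlinarith
  have hML : M * L = 1 := by simp only [hMdef, hLdef]; nlinarith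
  have hM0 : 0 < M := by nlinarith
  set vminus : Fin 2 → ℝ := ![c, -1] with hvm
  -- eigenvector equations
  have hAp : A.mulVec vplus = L • vplus := by
    funext i
    fin_cases i <;>
      simp [hA, hv, Matrix.mulVec, dotProduct, Fin.sum_univ_two, hcdef] <;>
      nlinarith [hs2]
  have hAm : A.mulVec vminus = M • vminus := by
    funext i
    fin_cases i <;>
      simp [hA, hvm, Matrix.mulVec, dotProduct, Fin.sum_univ_two, hcdef] <;>
      nlinarith [hs2]
  have pow_eig : ∀ (v : Fin 2 → ℝ) (t : ℝ), A.mulVec v = t • v →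
      ∀ k : ℕ, (A ^ k).mulVec v = t ^ k • v := by
    intro v t h k
    induction k with
    | zero => rw [pow_zero, pow_zero, Matrix.one_mulVec, one_smul]
    | succ k ih =>
      rw [pow_succ, ← Matrix.mulVec_mulVec, h, Matrix.mulVec_smul, ih, smul_smul,
        ← pow_succ']
  -- coefficients
  set a : ℝ := (x 0 + c * x 1) / (L - 1) with hadef
  set b : ℝ := (c * x 0 + x 1) / (L - 1) with hbdef
  have hL1' : L - 1 ≠ 0 := ne_of_gt (by linarith)
  have ha' : a * (L - 1) = x 0 + c * x 1 := div_mul_cancel₀ _ hL1'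
  have hb' : b * (L - 1) = c * x 0 + x 1 := div_mul_cancel₀ _ hL1'
  have hvp0 : vplus 0 = -1 := by rw [hv]; rfl
  have hvp1 : vplus 1 = c := by rw [hv]; rfl
  have hvm0 : vminus 0 = c := rfl
  have hvm1 : vminus 1 = -1 := rfl
  clear_value s c L M vminus a b
  have hxdecomp : x = a • vplus + b • vminus := by
    funext i
    fin_cases i
    · show x 0 = a • vplus 0 + b • vminus 0
      rw [hvp0, hvm0, smul_eq_mul, smul_eq_mul]
      have hmul : x 0 * (L - 1) = (a * -1 + b * c) * (L - 1) := by
        linear_combination ha' - c * hb' - x 0 * hcL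
      exact mul_right_cancel₀ hL1' hmul
    · show x 1 = a • vplus 1 + b • vminus 1
      rw [hvp1, hvm1, smul_eq_mul, smul_eq_mul]
      have hmul : x 1 * (L - 1) = (a * c + b * -1) * (L - 1) := by
        linear_combination (-c) * ha' + hb' - x 1 * hcL
      exact mul_right_cancel₀ hL1' hmul
  have hxi : x 0 ≠ 0 ∨ x 1 ≠ 0 := by
    by_contra h
    push_neg at h
    apply hx0
    funext i
    fin_cases i <;> simp [h.1, h.2]
  have ha0 : 0 < a := by
    rw [hadef]
    apply div_pos _ (by linarith)
    rcases hxi with h | h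
    · nlinarith [hx.1, hx.2, lt_of_le_of_ne hx.1 (Ne.symm h)]
    · nlinarith [hx.1, hx.2, lt_of_le_of_ne hx.2 (Ne.symm h)]
  -- the normalized sequence
  set r : ℝ := M / L with hrdef
  have hr0 : 0 ≤ r := le_of_lt (div_pos hM0 (by linarith))
  have hr1 : r < 1 := by
    rw [hrdef, div_lt_one (by linarith)]
    nlinarith
  set g : ℕ → (Fin 2 → ℝ) := fun k => a • vplus + (b * r ^ k) • vminus with hgdef
  have hLk : ∀ k : ℕ, (0 : ℝ) < L ^ k := fun k => pow_pos (by linarith) k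
  have hkey : ∀ k : ℕ, (A ^ k).mulVec x = L ^ k • g k := by
    intro k
    rw [hxdecomp, Matrix.mulVec_add, Matrix.mulVec_smul, Matrix.mulVec_smul,
      pow_eig vplus L hAp k, pow_eig vminus M hAm k, hgdef]
    simp only [smul_add, smul_smul]
    congr 1
    · ring_nf
    · congr 1
      rw [hrdef, div_pow, mul_comm]
      field_simp
  -- limit of g
  have hglim : Filter.Tendsto g Filter.atTop (nhds (a • vplus)) := by
    have h1 : Filter.Tendsto (fun k : ℕ => b * r ^ k) Filter.atTop (nhds 0) := by
      have := tendsto_pow_atTop_nhds_zero_of_lt_one hr0 hr1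
      simpa using this.const_mul b
    have h2 : Filter.Tendsto (fun k : ℕ => (b * r ^ k) • vminus) Filter.atTop
        (nhds ((0 : ℝ) • vminus)) := h1.smul_const vminus
    rw [zero_smul] at h2
    simpa using (tendsto_const_nhds (x := a • vplus)).add h2
  -- continuity of normalization at a • vplus
  have hNv : 0 < eucNorm vplus := by
    rw [hv]
    apply Real.sqrt_pos.mpr
    simp
    nlinarith
  have hNav : eucNorm (a • vplus) ≠ 0 := by
    rw [eucNorm_smul a ha0.le]
    positivity
  have hF : ContinuousAt (fun y : Fin 2 → ℝ => (eucNorm y)⁻¹ • y) (a • vplus) := by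
    exact ContinuousAt.smul ((continuousAt_inv₀ hNav).comp continuous_eucNorm.continuousAt)
      continuousAt_id
  have hcomp := hF.tendsto.comp hglim
  have heq : (eucNorm (a • vplus))⁻¹ • a • vplus
      = (eucNorm vplus)⁻¹ • vplus := by
    simp only [eucNorm_smul a ha0.le, mul_inv, smul_smul]
    rw [mul_comm a⁻¹, mul_assoc, inv_mul_cancel₀ ha0.ne', mul_one]
  rw [heq] at hcomp
  apply hcomp.congr
  intro k
  simp only [Function.comp_apply, hkey k, eucNorm_smul (L ^ k) (hLk k).le, mul_inv,
    smul_smul]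
  congr 1
  rw [mul_comm (L ^ k)⁻¹, mul_assoc, inv_mul_cancel₀ (hLk k).ne', mul_one]
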